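/- Every rank-decreasing hop-by-hop path from (x,y) to the destination has length exactly |x|+|y|: if f : {0,1,…,n} → ℤ² satisfies f(0) = (x,y), f(n) = (0,0), each consecutive pair f(k), f(k+1) is at Manhattan distance 1, and ρ(f(k+1)) is lexicographically strictly smaller than ρ(f(k)) for every k < n, then n = |x| + |y|. -/
import Mathlib


/-- The rank of a grid node `(u,v) ∈ ℤ²`: `ρ(u,v) = (|u|+|v|, ||u|−|v||) ∈ ℕ×ℕ`. -/
def rho (u v : ℤ) : ℕ × ℕ := (u.natAbs + v.natAbs, (|u| - |v|).natAbs)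

/-- Lexicographic strict order on `ℕ × ℕ`. -/
def lexLt (a b : ℕ × ℕ) : Prop := a.1 < b.1 ∨ (a.1 = b.1 ∧ a.2 < b.2)

theorem rank_decreasing_path_length (x y : ℤ) (n : ℕ) (f : ℕ → ℤ × ℤ)
    (h0 : f 0 = (x, y)) (hn : f n = (0, 0))
    (hstep : ∀ k < n, |(f (k + 1)).1 - (f k).1| + |(f (k + 1)).2 - (f k).2| = 1)
    (hdec : ∀ k < n, lexLt (rho (f (k + 1)).1 (f (k + 1)).2) (rho (f k).1 (f k).2)) :
    (n : ℤ) = |x| + |y| := by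
  have key : ∀ k ≤ n, (f k).1.natAbs + (f k).2.natAbs + k = x.natAbs + y.natAbs := by
    intro k
    induction k with
    | zero => intro _; rw [h0]; rfl
    | succ k ih =>
      intro hk
      have hkn : k < n := hk
      have ih' := ih (Nat.le_of_lt hkn)
      have hs := hstep k hkn
      have hd := hdec k hkn
      rw [Int.abs_eq_natAbs, Int.abs_eq_natAbs] at hs
      rcases hd with h | ⟨h, _⟩ <;>
        simp only [rho] at h <;> omega
  have hN := key n le_rfl
  rw [hn] at hN
  simp at hN
  rw [Int.abs_eq_natAbs, Int.abs_eq_natAbs]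
  omega
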